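/- arXiv:math/0107212 — 2 statements merged into one kernel-verified Lean document; each statement's English description precedes it below -/
import Mathlib

section
/- Let L(x,v) be a smooth Lagrangian on U × ℝⁿ whose Legendre map λ(x,v) = (x, ∂L/∂v(x,v)) is a bijection of U × ℝⁿ onto U × ℝⁿ with smooth inverse, and let H be the Hamilton function. A C² curve t ↦ x(t) in U satisfies the Euler–Lagrange equations (d/dt)(∂L/∂v^k)(x(t),ẋ(t)) − (∂L/∂x^k)(x(t),ẋ(t)) = 0 if and only if the pair (x(t), p(t)), with p_k(t) = ∂L/∂v^k(x(t),ẋ(t)), satisfies the Hamilton equations ẋ^k = ∂H/∂p_k(x(t),p(t)) and ∇_t p_k = −∇_k H(x(t),p(t)), where ∇_t p_k = ṗ_k − Σ_{q,b} Γ^b_{qk}(x(t)) p_b ẋ^q and ∇_k H = ∂H/∂x^k + Σ_{a,b} p_a Γ^a_{kb}(x) ∂H/∂p_b. -/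
open Real Set
open scoped ContDiff

noncomputable section

abbrev Vec (n : ℕ) := Fin n → ℝ

/-- Partial derivative of an extended field `f(x,v)` with respect to `x^q`. -/
def pdx {n : ℕ} (f : Vec n × Vec n → ℝ) (q : Fin n) (p : Vec n × Vec n) : ℝ :=
  fderiv ℝ f p (Pi.single q 1, 0)

/-- Partial derivative of an extended field `f(x,v)` with respect to `v^k`. -/
def pdv {n : ℕ} (f : Vec n × Vec n → ℝ) (k : Fin n) (p : Vec n × Vec n) : ℝ :=
  fderiv ℝ f p (0, Pi.single k 1)

/-- Christoffel symbols `Γ^k_{ij}(x)` of a metric `g`. -/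
def Christoffel {n : ℕ} (g : Vec n → Matrix (Fin n) (Fin n) ℝ) (k i j : Fin n)
    (x : Vec n) : ℝ :=
  (1/2) * ∑ l, (g x)⁻¹ k l *
    (fderiv ℝ (fun y => g y l j) x (Pi.single i 1)
      + fderiv ℝ (fun y => g y l i) x (Pi.single j 1)
      - fderiv ℝ (fun y => g y i j) x (Pi.single l 1))

/-- `|v|`, the norm of `v` in the metric `g` at the point `x`. -/
def nrm {n : ℕ} (g : Vec n → Matrix (Fin n) (Fin n) ℝ) (x v : Vec n) : ℝ :=
  Real.sqrt (∑ i, ∑ j, g x i j * v i * v j)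

/-- Index lowering: `v_r = Σ_s g_{rs} v^s`. -/
def lower {n : ℕ} (g : Vec n → Matrix (Fin n) (Fin n) ℝ) (x v : Vec n) (r : Fin n) : ℝ :=
  ∑ s, g x r s * v s

/-- Spatial gradient `∇_q f` of an extended scalar field. -/
def sgrad {n : ℕ} (g : Vec n → Matrix (Fin n) (Fin n) ℝ) (f : Vec n × Vec n → ℝ)
    (q : Fin n) (p : Vec n × Vec n) : ℝ :=
  pdx f q p - ∑ a, ∑ b, p.2 a * Christoffel g b q a p.1 * pdv f b p

/-- Spatial gradient `∇_q X_j` of an extended covector field. -/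
def sgradCov {n : ℕ} (g : Vec n → Matrix (Fin n) (Fin n) ℝ) (X : Fin n → Vec n × Vec n → ℝ)
    (q j : Fin n) (p : Vec n × Vec n) : ℝ :=
  pdx (X j) q p - ∑ a, ∑ b, p.2 a * Christoffel g b q a p.1 * pdv (X j) b p
    - ∑ b, Christoffel g b q j p.1 * X b p

/-!
Along the curve `(x, p) = λ(x, ẋ)`, so `μ(x, p) = (x, ẋ)`. Near such a point, writing
`μ(y, q) = (y, v(y, q))`, we have `H(y, q) = Σ_k v^k q_k − L(y, v)`; on differentiating, the terms
`Σ_k q_k dv^k` cancel against `∂L/∂v · dv` (since `q = ∂L/∂v(y, v)`), leaving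
`∂H/∂p_k = v^k` and `∂H/∂x^k = −∂L/∂x^k`. The first identity is the first Hamilton equation.
Substituting `∂H/∂p_b = ẋ^b` makes the two Christoffel terms of `∇_t p_k = −∇_k H` equal, by the
symmetry `Γ^a_{kb} = Γ^a_{bk}`, and what remains is the Euler–Lagrange equation.
-/

open Filter Topology

lemma fderiv_apply_eq_sum_pdx_add_sum_pdv {n : ℕ} (f : Vec n × Vec n → ℝ) (P w : Vec n × Vec n) :
    fderiv ℝ f P w = ∑ q, w.1 q * pdx f q P + ∑ k, w.2 k * pdv f k P := by
  have hw : w = ∑ q, w.1 q • ((Pi.single q 1 : Vec n), (0 : Vec n))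
      + ∑ k, w.2 k • ((0 : Vec n), (Pi.single k 1 : Vec n)) := by
    ext j <;> simp [Prod.fst_sum, Prod.snd_sum, Finset.sum_apply, Pi.single_apply]
  conv_lhs => rw [hw]
  simp only [map_add, map_sum, map_smul, smul_eq_mul, pdx, pdv]

lemma fst_fderiv_apply_of_eventually_fst_eq {E F G : Type*}
    [NormedAddCommGroup E] [NormedSpace ℝ E] [NormedAddCommGroup F] [NormedSpace ℝ F]
    [NormedAddCommGroup G] [NormedSpace ℝ G] {f : E × F → E × G} {P : E × F}
    (hf : DifferentiableAt ℝ f P) (hfst : (fun Q => (f Q).1) =ᶠ[𝓝 P] Prod.fst) (w : E × F) :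
    (fderiv ℝ f P w).1 = w.1 := by
  have h : fderiv ℝ (fun Q => (f Q).1) P = ContinuousLinearMap.fst ℝ E F := by
    rw [hfst.fderiv_eq, fderiv_fst]
  rw [hf.hasFDerivAt.fst.fderiv] at h
  exact congrArg (fun T : E × F →L[ℝ] E => T w) h

section Hamiltonian

variable {n : ℕ} {U : Set (Vec n)} {L H : Vec n × Vec n → ℝ} {mu : Vec n × Vec n → Vec n × Vec n}

lemma hamiltonian_eventuallyEq
    (hinv : ∀ P ∈ U ×ˢ (univ : Set (Vec n)), ((mu P).1, fun k => pdv L k (mu P)) = P)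
    (hH : ∀ P : Vec n × Vec n, H P = (∑ k, (mu P).2 k * pdv L k (mu P)) - L (mu P))
    (hU : IsOpen U) {P : Vec n × Vec n} (hP : P ∈ U ×ˢ (univ : Set (Vec n))) :
    H =ᶠ[𝓝 P] fun Q => (∑ k, (mu Q).2 k * Q.2 k) - L (mu Q) := by
  filter_upwards [(hU.prod isOpen_univ).mem_nhds hP] with Q hQ
  rw [hH, ← congrArg Prod.snd (hinv Q hQ)]

lemma fderiv_hamiltonian_apply (hU : IsOpen U)
    (hL : ContDiffOn ℝ ∞ L (U ×ˢ (univ : Set (Vec n))))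
    (hmu : ContDiffOn ℝ ∞ mu (U ×ˢ (univ : Set (Vec n))))
    (hinv : ∀ P ∈ U ×ˢ (univ : Set (Vec n)), ((mu P).1, fun k => pdv L k (mu P)) = P)
    (hH : ∀ P : Vec n × Vec n, H P = (∑ k, (mu P).2 k * pdv L k (mu P)) - L (mu P))
    {P : Vec n × Vec n} (hP : P ∈ U ×ˢ (univ : Set (Vec n))) (w : Vec n × Vec n) :
    fderiv ℝ H P w = ∑ k, (mu P).2 k * w.2 k - ∑ q, w.1 q * pdx L q (mu P) := by
  have hW : U ×ˢ (univ : Set (Vec n)) ∈ 𝓝 P := (hU.prod isOpen_univ).mem_nhds hP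
  have hmu_fst : ∀ Q ∈ U ×ˢ (univ : Set (Vec n)), (mu Q).1 = Q.1 :=
    fun Q hQ => (Prod.ext_iff.1 (hinv Q hQ)).1
  have hmuP : mu P ∈ U ×ˢ (univ : Set (Vec n)) := ⟨(hmu_fst P hP).symm ▸ hP.1, mem_univ _⟩
  have hmuD : DifferentiableAt ℝ mu P := (hmu.differentiableOn (by simp)).differentiableAt hW
  have hLD : DifferentiableAt ℝ L (mu P) :=
    (hL.differentiableOn (by simp)).differentiableAt ((hU.prod isOpen_univ).mem_nhds hmuP)
  have hmu_fst_near : (fun Q => (mu Q).1) =ᶠ[𝓝 P] Prod.fst := by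
    filter_upwards [hW] with Q hQ using hmu_fst Q hQ
  let coord : Fin n → (Vec n × Vec n →L[ℝ] ℝ) := fun k =>
    (ContinuousLinearMap.proj k).comp (ContinuousLinearMap.snd ℝ (Vec n) (Vec n))
  have hpair : ∀ k, HasFDerivAt (fun Q => (mu Q).2 k * Q.2 k)
      ((mu P).2 k • coord k + P.2 k • (coord k).comp (fderiv ℝ mu P)) P := fun k =>
    ((coord k).hasFDerivAt.comp P hmuD.hasFDerivAt).mul (coord k).hasFDerivAt
  have hloc : HasFDerivAt (fun Q => ∑ k, (mu Q).2 k * Q.2 k - L (mu Q)) _ P :=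
    (HasFDerivAt.fun_sum (u := Finset.univ) fun k _ => hpair k).sub
      (hLD.hasFDerivAt.comp P hmuD.hasFDerivAt)
  rw [(hamiltonian_eventuallyEq hinv hH hU hP).fderiv_eq, hloc.fderiv,
    sub_apply, ContinuousLinearMap.comp_apply,
    fderiv_apply_eq_sum_pdx_add_sum_pdv, fst_fderiv_apply_of_eventually_fst_eq hmuD hmu_fst_near]
  -- the variation `dv` of the velocity drops out because `∂L/∂v(μ P) = P.2`
  have hpdv : ∀ k, pdv L k (mu P) = P.2 k := fun k => congrFun (congrArg Prod.snd (hinv P hP)) k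
  simp only [sum_apply, add_apply, smul_apply, ContinuousLinearMap.comp_apply, smul_eq_mul, hpdv,
    coord, ContinuousLinearMap.coe_snd', ContinuousLinearMap.proj_apply, Finset.sum_add_distrib]
  simp only [mul_comm (P.2 _)]
  ring

lemma pdv_hamiltonian (hU : IsOpen U)
    (hL : ContDiffOn ℝ ∞ L (U ×ˢ (univ : Set (Vec n))))
    (hmu : ContDiffOn ℝ ∞ mu (U ×ˢ (univ : Set (Vec n))))
    (hinv : ∀ P ∈ U ×ˢ (univ : Set (Vec n)), ((mu P).1, fun k => pdv L k (mu P)) = P)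
    (hH : ∀ P : Vec n × Vec n, H P = (∑ k, (mu P).2 k * pdv L k (mu P)) - L (mu P))
    {P : Vec n × Vec n} (hP : P ∈ U ×ˢ (univ : Set (Vec n))) (k : Fin n) :
    pdv H k P = (mu P).2 k := by
  simp [pdv, fderiv_hamiltonian_apply hU hL hmu hinv hH hP, Pi.single_apply]

lemma pdx_hamiltonian (hU : IsOpen U)
    (hL : ContDiffOn ℝ ∞ L (U ×ˢ (univ : Set (Vec n))))
    (hmu : ContDiffOn ℝ ∞ mu (U ×ˢ (univ : Set (Vec n))))
    (hinv : ∀ P ∈ U ×ˢ (univ : Set (Vec n)), ((mu P).1, fun k => pdv L k (mu P)) = P)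
    (hH : ∀ P : Vec n × Vec n, H P = (∑ k, (mu P).2 k * pdv L k (mu P)) - L (mu P))
    {P : Vec n × Vec n} (hP : P ∈ U ×ˢ (univ : Set (Vec n))) (k : Fin n) :
    pdx H k P = -pdx L k (mu P) := by
  simp [pdx, fderiv_hamiltonian_apply hU hL hmu hinv hH hP, Pi.single_apply]

end Hamiltonian

lemma christoffel_comm {n : ℕ} {g : Vec n → Matrix (Fin n) (Fin n) ℝ} {x : Vec n}
    (hg : ∀ᶠ y in 𝓝 x, (g y).IsSymm) (k i j : Fin n) :
    Christoffel g k i j x = Christoffel g k j i x := by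
  have hfd : fderiv ℝ (fun y => g y i j) x = fderiv ℝ (fun y => g y j i) x :=
    EventuallyEq.fderiv_eq (hg.mono fun y hy => (hy.apply i j).symm)
  simp only [Christoffel, hfd, add_comm]

lemma sum_christoffel_comm {n : ℕ} (Γ : Fin n → Fin n → Fin n → ℝ) (k : Fin n)
    (hΓ : ∀ a b, Γ a k b = Γ a b k) (p v : Fin n → ℝ) :
    ∑ q, ∑ b, Γ b q k * p b * v q = ∑ a, ∑ b, p a * Γ a k b * v b := by
  rw [Finset.sum_comm]
  exact Finset.sum_congr rfl fun a _ => Finset.sum_congr rfl fun b _ => by rw [hΓ]; ring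

theorem stmt_9_general {n : ℕ} (U : Set (Vec n)) (hU : IsOpen U)
    (g : Vec n → Matrix (Fin n) (Fin n) ℝ)
    (hgpos : ∀ x ∈ U, (g x).PosDef)
    (L : Vec n × Vec n → ℝ) (hL : ContDiffOn ℝ ∞ L (U ×ˢ (univ : Set (Vec n))))
    (lam : Vec n × Vec n → Vec n × Vec n)
    (hlam : ∀ p : Vec n × Vec n, lam p = (p.1, fun k => pdv L k p))
    (mu : Vec n × Vec n → Vec n × Vec n)
    (hmu : ContDiffOn ℝ ∞ mu (U ×ˢ (univ : Set (Vec n))))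
    (hmu1 : ∀ p ∈ U ×ˢ (univ : Set (Vec n)), mu (lam p) = p)
    (hmu2 : ∀ p ∈ U ×ˢ (univ : Set (Vec n)), lam (mu p) = p)
    (H : Vec n × Vec n → ℝ)
    (hH : ∀ p : Vec n × Vec n, H p = (∑ k, (mu p).2 k * pdv L k (mu p)) - L (mu p))
    (x : ℝ → Vec n) (hxU : ∀ t, x t ∈ U)
    (p : ℝ → Fin n → ℝ) (hp : ∀ t k, p t k = pdv L k (x t, deriv x t)) :
    (∀ t : ℝ, ∀ k : Fin n,
        deriv (fun s => pdv L k (x s, deriv x s)) t - pdx L k (x t, deriv x t) = 0)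
      ↔
    (∀ t : ℝ, ∀ k : Fin n,
        deriv x t k = pdv H k (x t, p t) ∧
        deriv (fun s => p s k) t
            - ∑ q, ∑ b, Christoffel g b q k (x t) * p t b * deriv x t q
          = -(pdx H k (x t, p t)
              + ∑ a, ∑ b, p t a * Christoffel g a k b (x t) * pdv H b (x t, p t))) := by
  have hinv : ∀ P ∈ U ×ˢ (univ : Set (Vec n)), ((mu P).1, fun k => pdv L k (mu P)) = P :=
    fun P hP => (hlam _).symm.trans (hmu2 P hP)
  have hPt : ∀ t, (x t, p t) = lam (x t, deriv x t) := fun t => by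
    rw [hlam]; exact Prod.ext rfl (funext (hp t))
  have hmuP : ∀ t, mu (x t, p t) = (x t, deriv x t) := fun t => by
    rw [hPt, hmu1 _ ⟨hxU t, mem_univ _⟩]
  have hPU : ∀ t, (x t, p t) ∈ U ×ˢ (univ : Set (Vec n)) := fun t => ⟨hxU t, mem_univ _⟩
  have hgsymm : ∀ t, ∀ᶠ y in 𝓝 (x t), (g y).IsSymm := fun t => by
    filter_upwards [hU.mem_nhds (hxU t)] with y hy
    exact Matrix.IsSymm.ext fun i j => by simpa using (hgpos y hy).isHermitian.apply i j
  have hp_fun : ∀ k, (fun s => p s k) = fun s => pdv L k (x s, deriv x s) :=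
    fun k => funext fun s => hp s k
  simp only [pdv_hamiltonian hU hL hmu hinv hH (hPU _), pdx_hamiltonian hU hL hmu hinv hH (hPU _),
    hmuP, hp_fun, true_and]
  refine forall_congr' fun t => forall_congr' fun k => ?_
  rw [sum_christoffel_comm (fun a b c => Christoffel g a b c (x t)) k
    (fun a b => christoffel_comm (hgsymm t) a k b)]
  constructor <;> intro h <;> linarith

/-- A C² curve satisfies the Euler–Lagrange equations iff the pair
`(x(t), p(t))` with `p_k = ∂L/∂v^k(x,ẋ)` satisfies the Hamilton equations
`ẋ^k = ∂H/∂p_k` and `∇_t p_k = −∇_k H`. -/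
theorem stmt_9 {n : ℕ} (U : Set (Vec n)) (hU : IsOpen U)
    (g : Vec n → Matrix (Fin n) (Fin n) ℝ)
    (hgsmooth : ∀ i j, ContDiffOn ℝ ∞ (fun x => g x i j) U)
    (hgpos : ∀ x ∈ U, (g x).PosDef)
    (L : Vec n × Vec n → ℝ) (hL : ContDiffOn ℝ ∞ L (U ×ˢ (univ : Set (Vec n))))
    (lam : Vec n × Vec n → Vec n × Vec n)
    (hlam : ∀ p : Vec n × Vec n, lam p = (p.1, fun k => pdv L k p))
    (hbij : Set.BijOn lam (U ×ˢ (univ : Set (Vec n))) (U ×ˢ (univ : Set (Vec n))))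
    (mu : Vec n × Vec n → Vec n × Vec n)
    (hmu : ContDiffOn ℝ ∞ mu (U ×ˢ (univ : Set (Vec n))))
    (hmu1 : ∀ p ∈ U ×ˢ (univ : Set (Vec n)), mu (lam p) = p)
    (hmu2 : ∀ p ∈ U ×ˢ (univ : Set (Vec n)), lam (mu p) = p)
    (H : Vec n × Vec n → ℝ)
    (hH : ∀ p : Vec n × Vec n, H p = (∑ k, (mu p).2 k * pdv L k (mu p)) - L (mu p))
    (x : ℝ → Vec n) (hx : ContDiff ℝ 2 x) (hxU : ∀ t, x t ∈ U)
    (p : ℝ → Fin n → ℝ) (hp : ∀ t k, p t k = pdv L k (x t, deriv x t)) :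
    (∀ t : ℝ, ∀ k : Fin n,
        deriv (fun s => pdv L k (x s, deriv x s)) t - pdx L k (x t, deriv x t) = 0)
      ↔
    (∀ t : ℝ, ∀ k : Fin n,
        deriv x t k = pdv H k (x t, p t) ∧
        deriv (fun s => p s k) t
            - ∑ q, ∑ b, Christoffel g b q k (x t) * p t b * deriv x t q
          = -(pdx H k (x t, p t)
              + ∑ a, ∑ b, p t a * Christoffel g a k b (x t) * pdv H b (x t, p t))) :=
  stmt_9_general U hU g hgpos L hL lam hlam mu hmu hmu1 hmu2 H hH x hxU p hp
end
end

section
/- Let L be a fiberwise spherically symmetric smooth Lagrangian on U × (ℝⁿ∖{0}) with L′ ≠ 0 and L″ ≠ 0 everywhere. Then the Euler–Lagrange force field of L — the unique extended covector field F satisfying Σ_s ∇̃_s∇̃_k L · F^s + Σ_s ∇_s∇̃_k L · v^s − ∇_k L = 0 (with F^s = Σ_r g^{sr} F_r) — is given explicitly by F_r = −Σ_s (∇_s L′/L″ − ∇_s L/(|v|·L″))·(v^s v_r/|v|) − |v|·Σ_s (∇_s L/L′)·(v^s v_r/|v|² − δ^s_r). -/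
/-!
Write `L = ξ(x, |v|)` and `u_k = v_k / |v|`. Then `∇̃_k L = L′ u_k` and `∇̃_s L′ = L″ u_s`, so
`∇̃_s ∇̃_k L = L″ u_s u_k + (L′ / |v|) (g_{ks} - u_k u_s)`. The metric is parallel for its
Levi-Civita connection, hence so are `v_k`, `|v|` and `u_k`, and the Leibniz rule gives
`∇_s ∇̃_k L = ∇_s L′ · u_k`. The Euler–Lagrange equation therefore reads
`L″ u_k ⟨u, F⟩ + (L′ / |v|) (F_k - u_k ⟨u, F⟩) + (v^s ∇_s L′) u_k = ∇_k L`.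
Contracting it with `v^k` gives `L″ ⟨v, F⟩ = v^s ∇_s L - |v| v^s ∇_s L′`, and substituting this
back solves the equation for `F_k`.
-/

open Real Set
open scoped ContDiff

noncomputable section

open Filter
open scoped Topology

section MetricAlgebra

open scoped Matrix

variable {n : ℕ} {g : Vec n → Matrix (Fin n) (Fin n) ℝ} {x : Vec n}

theorem Matrix.sum_mul_inv_mulVec {G : Matrix (Fin n) (Fin n) ℝ} (hG : IsUnit G.det) (T : Vec n)
    (k : Fin n) : ∑ s, G k s * (G⁻¹ *ᵥ T) s = T k := by
  change (G *ᵥ (G⁻¹ *ᵥ T)) k = T k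
  rw [Matrix.mulVec_mulVec, Matrix.mul_nonsing_inv G hG, Matrix.one_mulVec]

theorem Matrix.IsSymm.sum_mulVec_mul_inv_mulVec {G : Matrix (Fin n) (Fin n) ℝ} (hG : G.IsSymm)
    (hdet : IsUnit G.det) (v T : Vec n) :
    ∑ s, (G *ᵥ v) s * (G⁻¹ *ᵥ T) s = ∑ t, v t * T t := by
  change (G *ᵥ v) ⬝ᵥ (G⁻¹ *ᵥ T) = v ⬝ᵥ T
  rw [← Matrix.vecMul_transpose, hG, ← Matrix.dotProduct_mulVec, Matrix.mulVec_mulVec,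
    Matrix.mul_nonsing_inv G hdet, Matrix.one_mulVec]

def dMetric (g : Vec n → Matrix (Fin n) (Fin n) ℝ) (q i j : Fin n) (x : Vec n) : ℝ :=
  fderiv ℝ (fun y => g y i j) x (Pi.single q 1)

theorem sum_christoffel_mul_metric (hsymm : (g x).IsSymm) (hdet : IsUnit (g x).det)
    (q i j : Fin n) :
    ∑ b, Christoffel g b q i x * g x b j
      = (1 / 2) * (dMetric g q j i x + dMetric g i j q x - dMetric g j q i x) := by
  simp only [Christoffel, mul_assoc, ← Finset.mul_sum]
  congr 1
  calc _ = ∑ b, g x j b * ((g x)⁻¹ *ᵥ fun l => dMetric g q l i x + dMetric g i l q x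
        - dMetric g l q i x) b :=
        Finset.sum_congr rfl fun b _ => by rw [mul_comm, hsymm.apply b j]; rfl
    _ = _ := Matrix.sum_mul_inv_mulVec hdet _ j

theorem dMetric_symm (hsymm : ∀ᶠ y in 𝓝 x, (g y).IsSymm) (q i j : Fin n) :
    dMetric g q i j x = dMetric g q j i x := by
  have hev : (fun y => g y i j) =ᶠ[𝓝 x] fun y => g y j i := hsymm.mono fun y hy => hy.apply j i
  rw [dMetric, dMetric, hev.fderiv_eq]

theorem dMetric_eq_sum_christoffel (hsymm : ∀ᶠ y in 𝓝 x, (g y).IsSymm)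
    (hdet : IsUnit (g x).det) (q i j : Fin n) :
    dMetric g q i j x
      = ∑ b, (Christoffel g b q i x * g x b j + g x i b * Christoffel g b q j x) := by
  have hx := hsymm.self_of_nhds
  have hswap : ∑ b, g x i b * Christoffel g b q j x = ∑ b, Christoffel g b q j x * g x b i :=
    Finset.sum_congr rfl fun b _ => by rw [hx.apply b i, mul_comm]
  rw [Finset.sum_add_distrib, hswap, sum_christoffel_mul_metric hx hdet,
    sum_christoffel_mul_metric hx hdet, dMetric_symm hsymm q j i, dMetric_symm hsymm i j q,
    dMetric_symm hsymm j q i]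
  ring

end MetricAlgebra

section Calculus

variable {n : ℕ} {g : Vec n → Matrix (Fin n) (Fin n) ℝ} {f h : Vec n × Vec n → ℝ}
  {p : Vec n × Vec n}

theorem pdx_congr (hfh : f =ᶠ[𝓝 p] h) (q : Fin n) : pdx f q p = pdx h q p := by
  rw [pdx, hfh.fderiv_eq, pdx]

theorem pdv_congr (hfh : f =ᶠ[𝓝 p] h) (k : Fin n) : pdv f k p = pdv h k p := by
  rw [pdv, hfh.fderiv_eq, pdv]

theorem sgradCov_congr {X Y : Fin n → Vec n × Vec n → ℝ} (hXY : ∀ j, X j =ᶠ[𝓝 p] Y j)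
    (q j : Fin n) : sgradCov g X q j p = sgradCov g Y q j p := by
  simp only [sgradCov, pdx_congr (hXY j), pdv_congr (hXY j), fun b => (hXY b).eq_of_nhds]

theorem pdx_mul (hf : DifferentiableAt ℝ f p) (hh : DifferentiableAt ℝ h p) (q : Fin n) :
    pdx (fun y => f y * h y) q p = pdx f q p * h p + f p * pdx h q p := by
  simp only [pdx, fderiv_fun_mul hf hh, add_apply, smul_apply, smul_eq_mul]
  ring

theorem pdv_mul (hf : DifferentiableAt ℝ f p) (hh : DifferentiableAt ℝ h p) (k : Fin n) :
    pdv (fun y => f y * h y) k p = pdv f k p * h p + f p * pdv h k p := by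
  simp only [pdv, fderiv_fun_mul hf hh, add_apply, smul_apply, smul_eq_mul]
  ring

theorem sgradCov_mul {Y : Fin n → Vec n × Vec n → ℝ} (hf : DifferentiableAt ℝ f p)
    {j : Fin n} (hY : DifferentiableAt ℝ (Y j) p) (q : Fin n) :
    sgradCov g (fun i y => f y * Y i y) q j p
      = sgrad g f q p * Y j p + f p * sgradCov g Y q j p := by
  simp only [sgradCov, sgrad, pdx_mul hf hY, pdv_mul hf hY, mul_add, Finset.sum_add_distrib,
    sub_mul, mul_sub, Finset.sum_mul, Finset.mul_sum]
  ring_nf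

theorem pdx_comp {φ : ℝ → ℝ} {φ' : ℝ} (hφ : HasDerivAt φ φ' (f p))
    (hf : DifferentiableAt ℝ f p) (q : Fin n) :
    pdx (fun y => φ (f y)) q p = φ' * pdx f q p := by
  change fderiv ℝ (φ ∘ f) p _ = _
  rw [(hφ.comp_hasFDerivAt p hf.hasFDerivAt).fderiv]
  rfl

theorem pdv_comp {φ : ℝ → ℝ} {φ' : ℝ} (hφ : HasDerivAt φ φ' (f p))
    (hf : DifferentiableAt ℝ f p) (k : Fin n) :
    pdv (fun y => φ (f y)) k p = φ' * pdv f k p := by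
  change fderiv ℝ (φ ∘ f) p _ = _
  rw [(hφ.comp_hasFDerivAt p hf.hasFDerivAt).fderiv]
  rfl

theorem sgrad_comp {φ : ℝ → ℝ} {φ' : ℝ} (hφ : HasDerivAt φ φ' (f p))
    (hf : DifferentiableAt ℝ f p) (q : Fin n) :
    sgrad g (fun y => φ (f y)) q p = φ' * sgrad g f q p := by
  simp only [sgrad, pdx_comp hφ hf, pdv_comp hφ hf, mul_sub, Finset.mul_sum]
  ring_nf

theorem pdx_sum {ι : Type*} [Fintype ι] {f : ι → Vec n × Vec n → ℝ}
    (hf : ∀ i, DifferentiableAt ℝ (f i) p) (q : Fin n) :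
    pdx (fun y => ∑ i, f i y) q p = ∑ i, pdx (f i) q p := by
  simp [pdx, fderiv_fun_sum fun i _ => hf i]

theorem pdv_sum {ι : Type*} [Fintype ι] {f : ι → Vec n × Vec n → ℝ}
    (hf : ∀ i, DifferentiableAt ℝ (f i) p) (k : Fin n) :
    pdv (fun y => ∑ i, f i y) k p = ∑ i, pdv (f i) k p := by
  simp [pdv, fderiv_fun_sum fun i _ => hf i]

theorem hasFDerivAt_velocity (i : Fin n) :
    HasFDerivAt (fun y : Vec n × Vec n => y.2 i)
      ((ContinuousLinearMap.proj i).comp (ContinuousLinearMap.snd ℝ (Vec n) (Vec n))) p :=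
  ((ContinuousLinearMap.proj i).comp (ContinuousLinearMap.snd ℝ (Vec n) (Vec n))).hasFDerivAt

theorem pdx_velocity (i q : Fin n) : pdx (fun y : Vec n × Vec n => y.2 i) q p = 0 := by
  simp [pdx, (hasFDerivAt_velocity i).fderiv]

theorem pdv_velocity (i k : Fin n) :
    pdv (fun y : Vec n × Vec n => y.2 i) k p = if i = k then 1 else 0 := by
  simp [pdv, (hasFDerivAt_velocity i).fderiv, Pi.single_apply]

theorem differentiableAt_base {a : Vec n → ℝ} (ha : DifferentiableAt ℝ a p.1) :
    DifferentiableAt ℝ (fun y => a y.1) p :=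
  ha.comp p differentiableAt_fst

theorem pdx_base {a : Vec n → ℝ} (ha : DifferentiableAt ℝ a p.1) (q : Fin n) :
    pdx (fun y => a y.1) q p = fderiv ℝ a p.1 (Pi.single q 1) := by
  change fderiv ℝ (a ∘ Prod.fst) p _ = _
  simp [(ha.hasFDerivAt.comp p hasFDerivAt_fst).fderiv]

theorem pdv_base {a : Vec n → ℝ} (ha : DifferentiableAt ℝ a p.1) (k : Fin n) :
    pdv (fun y => a y.1) k p = 0 := by
  change fderiv ℝ (a ∘ Prod.fst) p _ = _
  simp [(ha.hasFDerivAt.comp p hasFDerivAt_fst).fderiv]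

def pdw (Φ : Vec n × ℝ → ℝ) (z : Vec n × ℝ) : ℝ :=
  fderiv ℝ Φ z (0, 1)

theorem pdv_comp_prodMk {Φ : Vec n × ℝ → ℝ} (hΦ : DifferentiableAt ℝ Φ (p.1, h p))
    (hh : DifferentiableAt ℝ h p) (k : Fin n) :
    pdv (fun y => Φ (y.1, h y)) k p = pdw Φ (p.1, h p) * pdv h k p := by
  have hpair : HasFDerivAt (fun y : Vec n × Vec n => (y.1, h y))
      ((ContinuousLinearMap.fst ℝ (Vec n) (Vec n)).prod (fderiv ℝ h p)) p :=
    hasFDerivAt_fst.prodMk hh.hasFDerivAt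
  change fderiv ℝ (Φ ∘ fun y : Vec n × Vec n => (y.1, h y)) p _ = _
  rw [(hΦ.hasFDerivAt.comp p hpair).fderiv]
  have hdir : ((0 : Vec n), pdv h k p) = pdv h k p • ((0 : Vec n), (1 : ℝ)) := by simp
  simp only [ContinuousLinearMap.comp_apply, ContinuousLinearMap.prod_apply,
    ContinuousLinearMap.coe_fst']
  rw [show fderiv ℝ h p (0, Pi.single k 1) = pdv h k p from rfl, hdir, map_smul, smul_eq_mul,
    mul_comm, pdw]

variable {X : Fin n → Vec n × Vec n → ℝ}

theorem pdx_sum_velocity_mul (hX : ∀ k, DifferentiableAt ℝ (X k) p) (q : Fin n) :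
    pdx (fun y => ∑ k, y.2 k * X k y) q p = ∑ k, p.2 k * pdx (X k) q p := by
  have hv k := (hasFDerivAt_velocity (p := p) k).differentiableAt
  rw [pdx_sum (f := fun k y => y.2 k * X k y) fun k => (hv k).mul (hX k)]
  simp [pdx_mul (hv _) (hX _), pdx_velocity]

theorem pdv_sum_velocity_mul (hX : ∀ k, DifferentiableAt ℝ (X k) p) (b : Fin n) :
    pdv (fun y => ∑ k, y.2 k * X k y) b p = ∑ k, p.2 k * pdv (X k) b p + X b p := by
  have hv k := (hasFDerivAt_velocity (p := p) k).differentiableAt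
  rw [pdv_sum (f := fun k y => y.2 k * X k y) fun k => (hv k).mul (hX k)]
  simp [pdv_mul (hv _) (hX _), pdv_velocity, Finset.sum_add_distrib, add_comm]

theorem sgrad_sum_velocity_mul (hX : ∀ k, DifferentiableAt ℝ (X k) p) (q : Fin n) :
    sgrad g (fun y => ∑ k, y.2 k * X k y) q p = ∑ k, p.2 k * sgradCov g X q k p := by
  have hswap : ∑ a, ∑ b, ∑ k, p.2 a * Christoffel g b q a p.1 * (p.2 k * pdv (X k) b p)
      = ∑ k, ∑ a, ∑ b, p.2 k * (p.2 a * Christoffel g b q a p.1 * pdv (X k) b p) := by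
    rw [Finset.sum_comm]
    refine (Finset.sum_congr rfl fun b _ => Finset.sum_comm).trans ?_
    rw [Finset.sum_comm]
    exact Finset.sum_congr rfl fun k _ => Finset.sum_comm.trans (by simp only [mul_left_comm])
  simp only [sgrad, sgradCov, pdx_sum_velocity_mul hX, pdv_sum_velocity_mul hX, mul_add,
    Finset.sum_add_distrib, mul_sub, Finset.sum_sub_distrib, Finset.mul_sum, hswap]
  simp only [mul_assoc, sub_sub]

end Calculus

structure IsRiemannianMetricOn {n : ℕ} (U : Set (Vec n))
    (g : Vec n → Matrix (Fin n) (Fin n) ℝ) : Prop where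
  contDiffOn : ∀ i j, ContDiffOn ℝ ∞ (fun x => g x i j) U
  posDef : ∀ x ∈ U, (g x).PosDef

namespace IsRiemannianMetricOn

variable {n : ℕ} {U : Set (Vec n)} {g : Vec n → Matrix (Fin n) (Fin n) ℝ} {x : Vec n}

theorem isSymm (hg : IsRiemannianMetricOn U g) (hx : x ∈ U) : (g x).IsSymm :=
  Matrix.isHermitian_iff_isSymm.1 (hg.posDef x hx).isHermitian

theorem apply_comm (hg : IsRiemannianMetricOn U g) (hx : x ∈ U) (i j : Fin n) :
    g x i j = g x j i :=
  ((hg.isSymm hx).apply i j).symm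

theorem isUnit_det (hg : IsRiemannianMetricOn U g) (hx : x ∈ U) : IsUnit (g x).det :=
  isUnit_iff_ne_zero.2 (hg.posDef x hx).det_pos.ne'

theorem differentiableAt (hg : IsRiemannianMetricOn U g) (hU : IsOpen U) (hx : x ∈ U)
    (i j : Fin n) : DifferentiableAt ℝ (fun y => g y i j) x :=
  ((hg.contDiffOn i j).differentiableOn (by simp)).differentiableAt (hU.mem_nhds hx)

theorem dMetric_eq_sum_christoffel (hg : IsRiemannianMetricOn U g) (hU : IsOpen U)
    (hx : x ∈ U) (q i j : Fin n) :
    dMetric g q i j x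
      = ∑ b, (Christoffel g b q i x * g x b j + g x i b * Christoffel g b q j x) :=
  _root_.dMetric_eq_sum_christoffel
    (Filter.mem_of_superset (hU.mem_nhds hx) fun _ hy => hg.isSymm hy) (hg.isUnit_det hx) q i j

end IsRiemannianMetricOn

section MetricFields

variable {n : ℕ} {U : Set (Vec n)} {g : Vec n → Matrix (Fin n) (Fin n) ℝ} {p : Vec n × Vec n}

def slitTangent (U : Set (Vec n)) : Set (Vec n × Vec n) :=
  U ×ˢ {0}ᶜ

theorem isOpen_slitTangent (hU : IsOpen U) : IsOpen (slitTangent U) :=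
  hU.prod isOpen_compl_singleton

def lowerField (g : Vec n → Matrix (Fin n) (Fin n) ℝ) (k : Fin n) (y : Vec n × Vec n) : ℝ :=
  lower g y.1 y.2 k

def normField (g : Vec n → Matrix (Fin n) (Fin n) ℝ) (y : Vec n × Vec n) : ℝ :=
  nrm g y.1 y.2

def unitLowerField (g : Vec n → Matrix (Fin n) (Fin n) ℝ) (k : Fin n) (y : Vec n × Vec n) :
    ℝ :=
  (normField g y)⁻¹ * lowerField g k y

theorem differentiableAt_lowerField (hg : IsRiemannianMetricOn U g) (hU : IsOpen U)
    (hp : p.1 ∈ U) (k : Fin n) : DifferentiableAt ℝ (lowerField g k) p := by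
  change DifferentiableAt ℝ (fun y => ∑ s, g y.1 k s * y.2 s) p
  exact DifferentiableAt.fun_sum fun s _ =>
    (differentiableAt_base (hg.differentiableAt hU hp k s)).mul
      (hasFDerivAt_velocity s).differentiableAt

theorem pdx_lowerField (hg : IsRiemannianMetricOn U g) (hU : IsOpen U) (hp : p.1 ∈ U)
    (k q : Fin n) : pdx (lowerField g k) q p = ∑ s, dMetric g q k s p.1 * p.2 s := by
  have hd s := differentiableAt_base (p := p) (hg.differentiableAt hU hp k s)
  have hv s := (hasFDerivAt_velocity (p := p) s).differentiableAt
  change pdx (fun y => ∑ s, g y.1 k s * y.2 s) q p = _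
  rw [pdx_sum (f := fun s y => g y.1 k s * y.2 s) fun s => (hd s).mul (hv s)]
  refine Finset.sum_congr rfl fun s _ => ?_
  rw [pdx_mul (hd s) (hv s), pdx_base (hg.differentiableAt hU hp k s), pdx_velocity,
    mul_zero, add_zero, dMetric]

theorem pdv_lowerField (hg : IsRiemannianMetricOn U g) (hU : IsOpen U) (hp : p.1 ∈ U)
    (k b : Fin n) : pdv (lowerField g k) b p = g p.1 k b := by
  have hd s := differentiableAt_base (p := p) (hg.differentiableAt hU hp k s)
  have hv s := (hasFDerivAt_velocity (p := p) s).differentiableAt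
  change pdv (fun y => ∑ s, g y.1 k s * y.2 s) b p = _
  rw [pdv_sum (f := fun s y => g y.1 k s * y.2 s) fun s => (hd s).mul (hv s)]
  simp only [pdv_mul (hd _) (hv _), pdv_base (hg.differentiableAt hU hp k _), pdv_velocity]
  simp

theorem sgradCov_lowerField (hg : IsRiemannianMetricOn U g) (hU : IsOpen U) (hp : p.1 ∈ U)
    (q k : Fin n) : sgradCov g (lowerField g) q k p = 0 := by
  simp only [sgradCov, pdx_lowerField hg hU hp, pdv_lowerField hg hU hp,
    hg.dMetric_eq_sum_christoffel hU hp, Finset.sum_mul, add_mul, Finset.sum_add_distrib]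
  have hfirst : ∑ s, ∑ b, Christoffel g b q k p.1 * g p.1 b s * p.2 s
      = ∑ b, Christoffel g b q k p.1 * lowerField g b p := by
    rw [Finset.sum_comm]
    simp only [lowerField, lower, Finset.mul_sum, mul_assoc]
  have hsecond : ∑ s, ∑ b, g p.1 k b * Christoffel g b q s p.1 * p.2 s
      = ∑ a, ∑ b, p.2 a * Christoffel g b q a p.1 * g p.1 k b :=
    Finset.sum_congr rfl fun a _ => Finset.sum_congr rfl fun b _ => by ring
  rw [hfirst, hsecond]
  ring

def sqNormField (g : Vec n → Matrix (Fin n) (Fin n) ℝ) (y : Vec n × Vec n) : ℝ :=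
  ∑ k, y.2 k * lowerField g k y

theorem normField_eq_sqrt (g : Vec n → Matrix (Fin n) (Fin n) ℝ) :
    normField g = fun y => √(sqNormField g y) := by
  funext y
  simp only [normField, nrm, sqNormField, lowerField, lower, Finset.mul_sum]
  exact congrArg _ (Finset.sum_congr rfl fun i _ => Finset.sum_congr rfl fun j _ => by ring)

theorem sqNormField_pos (hg : IsRiemannianMetricOn U g) (hp : p ∈ slitTangent U) :
    0 < sqNormField g p := by
  have := (hg.posDef p.1 hp.1).dotProduct_mulVec_pos hp.2
  simp only [star_trivial] at this
  exact this

theorem normField_pos (hg : IsRiemannianMetricOn U g) (hp : p ∈ slitTangent U) :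
    0 < normField g p := by
  rw [normField_eq_sqrt]
  exact Real.sqrt_pos.2 (sqNormField_pos hg hp)

theorem normField_sq (hg : IsRiemannianMetricOn U g) (hp : p ∈ slitTangent U) :
    normField g p ^ 2 = sqNormField g p := by
  rw [normField_eq_sqrt]
  exact Real.sq_sqrt (sqNormField_pos hg hp).le

theorem differentiableAt_sqNormField (hg : IsRiemannianMetricOn U g) (hU : IsOpen U)
    (hp : p.1 ∈ U) : DifferentiableAt ℝ (sqNormField g) p :=
  DifferentiableAt.fun_sum fun k _ =>
    (hasFDerivAt_velocity k).differentiableAt.mul (differentiableAt_lowerField hg hU hp k)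

theorem pdv_sqNormField (hg : IsRiemannianMetricOn U g) (hU : IsOpen U) (hp : p.1 ∈ U)
    (b : Fin n) : pdv (sqNormField g) b p = 2 * lowerField g b p := by
  change pdv (fun y => ∑ k, y.2 k * lowerField g k y) b p = _
  have hsymm : ∑ k, p.2 k * g p.1 k b = lowerField g b p :=
    Finset.sum_congr rfl fun k _ => by rw [hg.apply_comm hp, mul_comm]
  simp only [pdv_sum_velocity_mul (differentiableAt_lowerField hg hU hp),
    pdv_lowerField hg hU hp, hsymm]
  ring

theorem sgrad_sqNormField (hg : IsRiemannianMetricOn U g) (hU : IsOpen U) (hp : p.1 ∈ U)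
    (q : Fin n) : sgrad g (sqNormField g) q p = 0 := by
  change sgrad g (fun y => ∑ k, y.2 k * lowerField g k y) q p = _
  rw [sgrad_sum_velocity_mul (differentiableAt_lowerField hg hU hp)]
  simp [sgradCov_lowerField hg hU hp]

theorem differentiableAt_normField (hg : IsRiemannianMetricOn U g) (hU : IsOpen U)
    (hp : p ∈ slitTangent U) : DifferentiableAt ℝ (normField g) p := by
  rw [normField_eq_sqrt]
  exact (differentiableAt_sqNormField hg hU hp.1).sqrt (sqNormField_pos hg hp).ne'

theorem pdv_normField (hg : IsRiemannianMetricOn U g) (hU : IsOpen U) (hp : p ∈ slitTangent U)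
    (b : Fin n) : pdv (normField g) b p = unitLowerField g b p := by
  have hN : √(sqNormField g p) = normField g p := (congrFun (normField_eq_sqrt g) p).symm
  rw [normField_eq_sqrt, pdv_comp (Real.hasDerivAt_sqrt (sqNormField_pos hg hp).ne')
    (differentiableAt_sqNormField hg hU hp.1), pdv_sqNormField hg hU hp.1, hN, unitLowerField]
  field_simp

theorem sgrad_normField (hg : IsRiemannianMetricOn U g) (hU : IsOpen U)
    (hp : p ∈ slitTangent U) (q : Fin n) : sgrad g (normField g) q p = 0 := by
  rw [normField_eq_sqrt, sgrad_comp (Real.hasDerivAt_sqrt (sqNormField_pos hg hp).ne')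
    (differentiableAt_sqNormField hg hU hp.1), sgrad_sqNormField hg hU hp.1, mul_zero]

theorem differentiableAt_inv_normField (hg : IsRiemannianMetricOn U g) (hU : IsOpen U)
    (hp : p ∈ slitTangent U) : DifferentiableAt ℝ (fun y => (normField g y)⁻¹) p :=
  (differentiableAt_normField hg hU hp).inv (normField_pos hg hp).ne'

theorem differentiableAt_unitLowerField (hg : IsRiemannianMetricOn U g) (hU : IsOpen U)
    (hp : p ∈ slitTangent U) (k : Fin n) : DifferentiableAt ℝ (unitLowerField g k) p :=
  (differentiableAt_inv_normField hg hU hp).mul (differentiableAt_lowerField hg hU hp.1 k)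

theorem pdv_unitLowerField (hg : IsRiemannianMetricOn U g) (hU : IsOpen U)
    (hp : p ∈ slitTangent U) (k s : Fin n) :
    pdv (unitLowerField g k) s p
      = (g p.1 k s - unitLowerField g k p * unitLowerField g s p) / normField g p := by
  have hpos := normField_pos hg hp
  change pdv (fun y => (normField g y)⁻¹ * lowerField g k y) s p = _
  rw [pdv_mul (differentiableAt_inv_normField hg hU hp)
      (differentiableAt_lowerField hg hU hp.1 k),
    pdv_comp (hasDerivAt_inv hpos.ne') (differentiableAt_normField hg hU hp),
    pdv_normField hg hU hp, pdv_lowerField hg hU hp.1]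
  simp only [unitLowerField]
  field_simp
  ring

theorem sgradCov_unitLowerField (hg : IsRiemannianMetricOn U g) (hU : IsOpen U)
    (hp : p ∈ slitTangent U) (q k : Fin n) : sgradCov g (unitLowerField g) q k p = 0 := by
  change sgradCov g (fun i y => (normField g y)⁻¹ * lowerField g i y) q k p = _
  rw [sgradCov_mul (differentiableAt_inv_normField hg hU hp)
      (differentiableAt_lowerField hg hU hp.1 k),
    sgrad_comp (hasDerivAt_inv (normField_pos hg hp).ne') (differentiableAt_normField hg hU hp),
    sgrad_normField hg hU hp, sgradCov_lowerField hg hU hp.1]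
  ring

end MetricFields

section SphericalFields

variable {n : ℕ} {U : Set (Vec n)} {g : Vec n → Matrix (Fin n) (Fin n) ℝ}
  {p : Vec n × Vec n} {Φ : Vec n × ℝ → ℝ}

theorem contDiffOn_pdw {s : Set (Vec n × ℝ)} (hs : IsOpen s) (hΦ : ContDiffOn ℝ ∞ Φ s) :
    ContDiffOn ℝ ∞ (pdw Φ) s :=
  (hΦ.fderiv_of_isOpen hs (by simp)).clm_apply contDiffOn_const

theorem hasDerivAt_pdw {x : Vec n} {w : ℝ} (hΦ : DifferentiableAt ℝ Φ (x, w)) :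
    HasDerivAt (fun t => Φ (x, t)) (pdw Φ (x, w)) w :=
  hΦ.hasFDerivAt.comp_hasDerivAt w ((hasDerivAt_const w x).prodMk (hasDerivAt_id w))

theorem deriv_deriv_eq_pdw_pdw {s : Set (Vec n × ℝ)} (hs : IsOpen s)
    (hΦ : ContDiffOn ℝ ∞ Φ s) {x : Vec n} {w : ℝ} (hxw : (x, w) ∈ s) :
    deriv (deriv fun t => Φ (x, t)) w = pdw (pdw Φ) (x, w) := by
  have hslice : IsOpen {t : ℝ | (x, t) ∈ s} :=
    hs.preimage (continuous_const.prodMk continuous_id)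
  have hev : deriv (fun t => Φ (x, t)) =ᶠ[𝓝 w] fun t => pdw Φ (x, t) :=
    Filter.eventually_of_mem (hslice.mem_nhds hxw) fun t ht =>
      (hasDerivAt_pdw ((hΦ.differentiableOn (by simp)).differentiableAt (hs.mem_nhds ht))).deriv
  rw [hev.deriv_eq]
  exact (hasDerivAt_pdw (((contDiffOn_pdw hs hΦ).differentiableOn (by simp)).differentiableAt
    (hs.mem_nhds hxw))).deriv

-- `X(x, v) = Φ(x, |v|)`; its `X′` is `sphericalField g (pdw Φ)`.
def sphericalField (g : Vec n → Matrix (Fin n) (Fin n) ℝ) (Φ : Vec n × ℝ → ℝ)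
    (y : Vec n × Vec n) : ℝ :=
  Φ (y.1, normField g y)

theorem mk_normField_mem (hg : IsRiemannianMetricOn U g) (hp : p ∈ slitTangent U) :
    (p.1, normField g p) ∈ U ×ˢ Ioi (0 : ℝ) :=
  ⟨hp.1, normField_pos hg hp⟩

theorem differentiableAt_sphericalField (hg : IsRiemannianMetricOn U g) (hU : IsOpen U)
    (hΦ : DifferentiableOn ℝ Φ (U ×ˢ Ioi 0)) (hp : p ∈ slitTangent U) :
    DifferentiableAt ℝ (sphericalField g Φ) p :=
  (hΦ.differentiableAt ((hU.prod isOpen_Ioi).mem_nhds (mk_normField_mem hg hp))).comp p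
    (differentiableAt_fst.prodMk (differentiableAt_normField hg hU hp))

theorem pdv_sphericalField (hg : IsRiemannianMetricOn U g) (hU : IsOpen U)
    (hΦ : DifferentiableOn ℝ Φ (U ×ˢ Ioi 0)) (hp : p ∈ slitTangent U) (k : Fin n) :
    pdv (sphericalField g Φ) k p = sphericalField g (pdw Φ) p * unitLowerField g k p := by
  have hchain := pdv_comp_prodMk (h := normField g)
    (hΦ.differentiableAt ((hU.prod isOpen_Ioi).mem_nhds (mk_normField_mem hg hp)))
    (differentiableAt_normField hg hU hp) k
  rwa [pdv_normField hg hU hp] at hchain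

theorem eqOn_sphericalField_pdw (hg : IsRiemannianMetricOn U g) (hU : IsOpen U)
    (hΦ : DifferentiableOn ℝ Φ (U ×ˢ Ioi 0)) {f : Vec n × Vec n → ℝ}
    (hf : ∀ y : Vec n × Vec n, f y = deriv (fun w => Φ (y.1, w)) (nrm g y.1 y.2)) :
    EqOn f (sphericalField g (pdw Φ)) (slitTangent U) := fun y hy =>
  (hf y).trans (hasDerivAt_pdw (hΦ.differentiableAt
    ((hU.prod isOpen_Ioi).mem_nhds (mk_normField_mem hg hy)))).deriv

theorem eqOn_sphericalField_pdw_pdw (hg : IsRiemannianMetricOn U g) (hU : IsOpen U)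
    (hΦ : ContDiffOn ℝ ∞ Φ (U ×ˢ Ioi 0)) {f : Vec n × Vec n → ℝ}
    (hf : ∀ y : Vec n × Vec n, f y = deriv (deriv fun w => Φ (y.1, w)) (nrm g y.1 y.2)) :
    EqOn f (sphericalField g (pdw (pdw Φ))) (slitTangent U) := fun y hy =>
  (hf y).trans (deriv_deriv_eq_pdw_pdw (hU.prod isOpen_Ioi) hΦ (mk_normField_mem hg hy))

end SphericalFields

-- Contracting `h` with `v` determines `∑ t, v t * F t`; the `r`-th equation then yields `F r`.
theorem eq_of_reduced_forceEquation {ι : Type*} [Fintype ι] [DecidableEq ι]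
    {v ℓ F G G' : ι → ℝ} {N a b : ℝ} (hN : N ≠ 0) (ha : a ≠ 0) (hb : b ≠ 0)
    (hvℓ : ∑ k, v k * ℓ k = N ^ 2)
    (h : ∀ k, b * (N⁻¹ * ℓ k) * (N⁻¹ * ∑ t, v t * F t)
      + a / N * (F k - N⁻¹ * ℓ k * (N⁻¹ * ∑ t, v t * F t))
      + (∑ s, v s * G' s) * (N⁻¹ * ℓ k) - G k = 0) (r : ι) :
    F r = -(∑ s, (G' s / b - G s / (N * b)) * (v s * ℓ r / N))
      - N * ∑ s, G s / a * (v s * ℓ r / N ^ 2 - if s = r then 1 else 0) := by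
  generalize hP : ∑ t, v t * F t = P at h
  generalize hS' : ∑ s, v s * G' s = S' at h ⊢
  generalize hS : ∑ s, v s * G s = S
  have hcontract : ∑ k, v k * (b * (N⁻¹ * ℓ k) * (N⁻¹ * P)
      + a / N * (F k - N⁻¹ * ℓ k * (N⁻¹ * P)) + S' * (N⁻¹ * ℓ k) - G k)
      = (∑ k, v k * ℓ k) * ((b - a / N) * N⁻¹ * N⁻¹ * P + S' * N⁻¹)
        + a / N * ∑ k, v k * F k - ∑ k, v k * G k := by
    rw [Finset.sum_mul, Finset.mul_sum, ← Finset.sum_add_distrib, ← Finset.sum_sub_distrib]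
    exact Finset.sum_congr rfl fun k _ => by ring
  simp only [h, mul_zero, Finset.sum_const_zero, hvℓ, hP, hS] at hcontract
  have hPS : P = (S - N * S') / b := by
    field_simp at hcontract
    rw [eq_div_iff hb]
    have hN' : N * (P * b - (S - N * S')) = 0 := by linear_combination -hcontract
    exact sub_eq_zero.1 ((mul_eq_zero.1 hN').resolve_left hN)
  have hFr : a / N * F r = G r - S' * (N⁻¹ * ℓ r) - b * (N⁻¹ * ℓ r) * (N⁻¹ * P)
      + a / N * (N⁻¹ * ℓ r * (N⁻¹ * P)) := by
    linear_combination h r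
  have e1 : ∑ s, (G' s / b - G s / (N * b)) * (v s * ℓ r / N)
      = S' * (ℓ r / (N * b)) - S * (ℓ r / (N ^ 2 * b)) := by
    rw [← hS', ← hS, Finset.sum_mul, Finset.sum_mul, ← Finset.sum_sub_distrib]
    exact Finset.sum_congr rfl fun s _ => by field_simp
  have e2 : ∑ s, G s / a * (v s * ℓ r / N ^ 2 - if s = r then 1 else 0)
      = S * (ℓ r / (N ^ 2 * a)) - G r / a := by
    simp only [mul_sub, Finset.sum_sub_distrib, mul_ite, mul_one, mul_zero,
      Finset.sum_ite_eq', Finset.mem_univ, if_true, ← hS, Finset.sum_mul]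
    congr 1
    exact Finset.sum_congr rfl fun s _ => by field_simp
  rw [show F r = N / a * (a / N * F r) by field_simp, hFr, e1, e2, hPS]
  field_simp
  ring

section EulerLagrange

variable {n : ℕ} {U : Set (Vec n)} {g : Vec n → Matrix (Fin n) (Fin n) ℝ}
  {p : Vec n × Vec n} {ξ : Vec n × ℝ → ℝ} {L Lp Lpp : Vec n × Vec n → ℝ}

theorem pdv_eventuallyEq_of_eqOn_sphericalField (hg : IsRiemannianMetricOn U g) (hU : IsOpen U)
    {Φ : Vec n × ℝ → ℝ} (hΦ : DifferentiableOn ℝ Φ (U ×ˢ Ioi 0))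
    {f f' : Vec n × Vec n → ℝ}
    (hf : EqOn f (sphericalField g Φ) (slitTangent U))
    (hf' : EqOn f' (sphericalField g (pdw Φ)) (slitTangent U)) (hp : p ∈ slitTangent U)
    (k : Fin n) : pdv f k =ᶠ[𝓝 p] fun y => f' y * unitLowerField g k y := by
  filter_upwards [(isOpen_slitTangent hU).mem_nhds hp] with y hy
  rw [pdv_congr (hf.eventuallyEq_of_mem ((isOpen_slitTangent hU).mem_nhds hy)),
    pdv_sphericalField hg hU hΦ hy, hf' hy]

theorem differentiableAt_of_eqOn_sphericalField (hg : IsRiemannianMetricOn U g)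
    (hU : IsOpen U) {Φ : Vec n × ℝ → ℝ} (hΦ : DifferentiableOn ℝ Φ (U ×ˢ Ioi 0))
    {f : Vec n × Vec n → ℝ} (hf : EqOn f (sphericalField g Φ) (slitTangent U))
    (hp : p ∈ slitTangent U) : DifferentiableAt ℝ f p :=
  (differentiableAt_sphericalField hg hU hΦ hp).congr_of_eventuallyEq
    (hf.eventuallyEq_of_mem ((isOpen_slitTangent hU).mem_nhds hp))

theorem pdv_pdv_of_sphericalField (hg : IsRiemannianMetricOn U g) (hU : IsOpen U)
    (hξ : ContDiffOn ℝ ∞ ξ (U ×ˢ Ioi 0)) (hL : EqOn L (sphericalField g ξ) (slitTangent U))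
    (hLp : EqOn Lp (sphericalField g (pdw ξ)) (slitTangent U))
    (hLpp : EqOn Lpp (sphericalField g (pdw (pdw ξ))) (slitTangent U)) (hp : p ∈ slitTangent U)
    (k s : Fin n) :
    pdv (pdv L k) s p = Lpp p * unitLowerField g k p * unitLowerField g s p
      + Lp p / normField g p * (g p.1 k s - unitLowerField g k p * unitLowerField g s p) := by
  have hξ' := (contDiffOn_pdw (hU.prod isOpen_Ioi) hξ).differentiableOn (by simp)
  rw [pdv_congr (pdv_eventuallyEq_of_eqOn_sphericalField hg hU (hξ.differentiableOn (by simp))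
      hL hLp hp k),
    pdv_mul (differentiableAt_of_eqOn_sphericalField hg hU hξ' hLp hp)
      (differentiableAt_unitLowerField hg hU hp k),
    (pdv_eventuallyEq_of_eqOn_sphericalField hg hU hξ' hLp hLpp hp s).eq_of_nhds,
    pdv_unitLowerField hg hU hp]
  ring

theorem sgradCov_pdv_of_sphericalField (hg : IsRiemannianMetricOn U g) (hU : IsOpen U)
    (hξ : ContDiffOn ℝ ∞ ξ (U ×ˢ Ioi 0)) (hL : EqOn L (sphericalField g ξ) (slitTangent U))
    (hLp : EqOn Lp (sphericalField g (pdw ξ)) (slitTangent U)) (hp : p ∈ slitTangent U)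
    (s k : Fin n) :
    sgradCov g (fun i => pdv L i) s k p = sgrad g Lp s p * unitLowerField g k p := by
  have hξ' := (contDiffOn_pdw (hU.prod isOpen_Ioi) hξ).differentiableOn (by simp)
  rw [sgradCov_congr (Y := fun i y => Lp y * unitLowerField g i y)
      (pdv_eventuallyEq_of_eqOn_sphericalField hg hU (hξ.differentiableOn (by simp)) hL hLp hp),
    sgradCov_mul (differentiableAt_of_eqOn_sphericalField hg hU hξ' hLp hp)
      (differentiableAt_unitLowerField hg hU hp k),
    sgradCov_unitLowerField hg hU hp]
  ring

theorem eulerLagrange_eq_of_sphericalField (hg : IsRiemannianMetricOn U g) (hU : IsOpen U)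
    (hξ : ContDiffOn ℝ ∞ ξ (U ×ˢ Ioi 0)) (hL : EqOn L (sphericalField g ξ) (slitTangent U))
    (hLp : EqOn Lp (sphericalField g (pdw ξ)) (slitTangent U))
    (hLpp : EqOn Lpp (sphericalField g (pdw (pdw ξ))) (slitTangent U)) (hp : p ∈ slitTangent U)
    (Fup : Vec n) (k : Fin n) :
    (∑ s, pdv (pdv L k) s p * Fup s) + (∑ s, sgradCov g (fun i => pdv L i) s k p * p.2 s)
        - sgrad g L k p
      = Lpp p * unitLowerField g k p * (∑ s, unitLowerField g s p * Fup s)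
        + Lp p / normField g p * ((∑ s, g p.1 k s * Fup s)
          - unitLowerField g k p * ∑ s, unitLowerField g s p * Fup s)
        + (∑ s, p.2 s * sgrad g Lp s p) * unitLowerField g k p - sgrad g L k p := by
  have hhess : ∑ s, pdv (pdv L k) s p * Fup s
      = Lpp p * unitLowerField g k p * (∑ s, unitLowerField g s p * Fup s)
        + Lp p / normField g p * ((∑ s, g p.1 k s * Fup s)
          - unitLowerField g k p * ∑ s, unitLowerField g s p * Fup s) := by
    simp only [pdv_pdv_of_sphericalField hg hU hξ hL hLp hLpp hp, Finset.mul_sum,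
      ← Finset.sum_sub_distrib, ← Finset.sum_add_distrib]
    exact Finset.sum_congr rfl fun s _ => by ring
  have hcov : ∑ s, sgradCov g (fun i => pdv L i) s k p * p.2 s
      = (∑ s, p.2 s * sgrad g Lp s p) * unitLowerField g k p := by
    simp only [sgradCov_pdv_of_sphericalField hg hU hξ hL hLp hp, Finset.sum_mul]
    exact Finset.sum_congr rfl fun s _ => by ring
  rw [hhess, hcov]

end EulerLagrange

/-- For a fiberwise spherically symmetric Lagrangian `L(x,v) = ξ(x,|v|)`
with `L′ ≠ 0`, `L″ ≠ 0`, any covector field `F` solving the Euler–Lagrange force-field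
equation `Σ_s ∇̃_s∇̃_k L · F^s + Σ_s ∇_s∇̃_k L · v^s − ∇_k L = 0` (with `F^s = Σ_r g^{sr}F_r`)
is given by formula (8.9):
`F_r = −Σ_s (∇_s L′/L″ − ∇_s L/(|v|·L″))·(v^s v_r/|v|) − |v|·Σ_s (∇_s L/L′)·(v^s v_r/|v|² − δ^s_r)`. -/
theorem stmt_13 {n : ℕ} (U : Set (Vec n)) (hU : IsOpen U)
    (g : Vec n → Matrix (Fin n) (Fin n) ℝ)
    (hgsmooth : ∀ i j, ContDiffOn ℝ ∞ (fun x => g x i j) U)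
    (hgpos : ∀ x ∈ U, (g x).PosDef)
    (ξ : Vec n × ℝ → ℝ) (hξ : ContDiffOn ℝ ∞ ξ (U ×ˢ Ioi (0:ℝ)))
    (L : Vec n × Vec n → ℝ)
    (hL : ∀ x ∈ U, ∀ v : Vec n, v ≠ 0 → L (x, v) = ξ (x, nrm g x v))
    -- the extended scalar fields `L′` and `L″`
    (Lp Lpp : Vec n × Vec n → ℝ)
    (hLp : ∀ p : Vec n × Vec n, Lp p = deriv (fun w => ξ (p.1, w)) (nrm g p.1 p.2))
    (hLpp : ∀ p : Vec n × Vec n, Lpp p = deriv (deriv (fun w => ξ (p.1, w))) (nrm g p.1 p.2))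
    (hLp0 : ∀ x ∈ U, ∀ v : Vec n, v ≠ 0 → Lp (x, v) ≠ 0)
    (hLpp0 : ∀ x ∈ U, ∀ v : Vec n, v ≠ 0 → Lpp (x, v) ≠ 0)
    (F : Fin n → Vec n × Vec n → ℝ)
    (hF : ∀ x ∈ U, ∀ v : Vec n, v ≠ 0 → ∀ k : Fin n,
      (∑ s, pdv (pdv L k) s (x, v) * (∑ r, (g x)⁻¹ s r * F r (x, v)))
          + (∑ s, sgradCov g (fun i => pdv L i) s k (x, v) * v s)
          - sgrad g L k (x, v) = 0) :
    ∀ x ∈ U, ∀ v : Vec n, v ≠ 0 → ∀ r : Fin n,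
      F r (x, v) =
        -(∑ s, (sgrad g Lp s (x, v) / Lpp (x, v)
              - sgrad g L s (x, v) / (nrm g x v * Lpp (x, v)))
            * (v s * lower g x v r / nrm g x v))
          - nrm g x v * ∑ s, (sgrad g L s (x, v) / Lp (x, v))
              * (v s * lower g x v r / (nrm g x v) ^ 2 - if s = r then 1 else 0) := by
  intro x hx v hv r
  have hg : IsRiemannianMetricOn U g := ⟨hgsmooth, hgpos⟩
  have hp : ((x, v) : Vec n × Vec n) ∈ slitTangent U := ⟨hx, hv⟩
  have hξ' : DifferentiableOn ℝ ξ (U ×ˢ Ioi 0) := hξ.differentiableOn (by simp)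
  have hmetric : ∀ k, ∑ s, g x k s * ∑ t, (g x)⁻¹ s t * F t (x, v) = F k (x, v) :=
    Matrix.sum_mul_inv_mulVec (hg.isUnit_det hx) _
  have hvelocity : ∑ s, unitLowerField g s (x, v) * ∑ t, (g x)⁻¹ s t * F t (x, v)
      = (nrm g x v)⁻¹ * ∑ t, v t * F t (x, v) := by
    simp only [unitLowerField, mul_assoc, ← Finset.mul_sum]
    exact congrArg _ ((hg.isSymm hx).sum_mulVec_mul_inv_mulVec (hg.isUnit_det hx) v _)
  refine eq_of_reduced_forceEquation (v := v) (ℓ := lower g x v) (F := fun t => F t (x, v))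
    (G := fun s => sgrad g L s (x, v)) (G' := fun s => sgrad g Lp s (x, v))
    (normField_pos hg hp).ne' (hLp0 x hx v hv) (hLpp0 x hx v hv) (normField_sq hg hp).symm
    (fun k => ?_) r
  have hk := hF x hx v hv k
  rw [eulerLagrange_eq_of_sphericalField hg hU hξ (fun y hy => hL y.1 hy.1 y.2 hy.2)
    (eqOn_sphericalField_pdw hg hU hξ' hLp) (eqOn_sphericalField_pdw_pdw hg hU hξ hLpp) hp,
    hmetric, hvelocity] at hk
  exact hk
end
end
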